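/- For every natural number n ≥ 2, 0 < ζ(3) − b_n/a_n. -/

import Mathlib

/-- ζ(3), the sum of the series ∑_{m=1}^∞ 1/m³. -/
noncomputable def zeta3 : ℝ := ∑' m : ℕ, 1 / ((m : ℝ) + 1) ^ 3

/-- `z n = ∑_{m=1}^n 1/m³`. -/
noncomputable def zseq (n : ℕ) : ℝ := ∑ m ∈ Finset.Icc 1 n, 1 / (m : ℝ) ^ 3

/-- `a n = ∑_{k=0}^n C(n,k)² C(n+k,k)²`. -/
noncomputable def aseq (n : ℕ) : ℝ :=
  ∑ k ∈ Finset.range (n + 1), (n.choose k : ℝ) ^ 2 * ((n + k).choose k : ℝ) ^ 2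

/-- `b n = a n * z n + ∑_{k=1}^n ∑_{m=1}^k (-1)^{m+1} C(n,k)² C(n+k,k)²
      / (2 m³ C(n,m) C(n+m,m))`. -/
noncomputable def bseq (n : ℕ) : ℝ :=
  aseq n * zseq n +
    ∑ k ∈ Finset.Icc 1 n, ∑ m ∈ Finset.Icc 1 k,
      (-1 : ℝ) ^ (m + 1) * (n.choose k : ℝ) ^ 2 * ((n + k).choose k : ℝ) ^ 2 /
        (2 * (m : ℝ) ^ 3 * (n.choose m : ℝ) * ((n + m).choose m : ℝ))

/-!
Apéry's argument. Both `aseq` and `bseq` satisfy the recurrence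
`(n + 2)³ u (n + 2) - P (n + 1) u (n + 1) + (n + 1)³ u n = 0` with `P x = 34x³ + 51x² + 27x + 5`;
this is proved by creative telescoping in `k`, with van der Poorten's certificates `aperyB` (for
`aseq`) and `aperyA` (for `bseq`). The Casoratian then satisfies
`(n + 1)³ (a n * b (n + 1) - a (n + 1) * b n) = 6`, so `b n / a n` is strictly increasing. Finally,
`b n / a n` is an average of the numbers `aperyC n k`, all within `ζ(3) / (2(n + 1))` of `z n`, so
it converges to `ζ(3)` and stays below it.
-/

open Finset Filter Topology

noncomputable def chooseProd (n k : ℕ) : ℝ := (n.choose k : ℝ) * ((n + k).choose k : ℝ)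

lemma chooseProd_zero_right (n : ℕ) : chooseProd n 0 = 1 := by simp [chooseProd]

lemma chooseProd_pos {n k : ℕ} (h : k ≤ n) : 0 < chooseProd n k := by
  unfold chooseProd
  have := Nat.choose_pos h
  have := Nat.choose_pos (Nat.le_add_left k n)
  positivity

lemma chooseProd_eq_zero {n k : ℕ} (h : n < k) : chooseProd n k = 0 := by
  simp [chooseProd, Nat.choose_eq_zero_of_lt h]

lemma chooseProd_succ_left_mul (n k : ℕ) :
    chooseProd (n + 1) k * ((n : ℝ) + 1 - k) = chooseProd n k * ((n : ℝ) + k + 1) := by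
  rcases le_or_gt k (n + 1) with hk | hk
  · have h₁ := Nat.choose_mul_succ_eq n k
    have h₂ := Nat.choose_mul_succ_eq (n + k) k
    rw [show n + k + 1 - k = n + 1 by omega, show n + k + 1 = n + 1 + k by omega] at h₂
    rw [← Nat.cast_inj (R := ℝ)] at h₁ h₂
    push_cast [Nat.cast_sub hk] at h₁ h₂
    unfold chooseProd
    have : ((n : ℝ) + 1) ≠ 0 := by positivity
    apply mul_right_cancel₀ this
    linear_combination -((n + 1 + k).choose k : ℝ) * ((n : ℝ) + 1) * h₁
      - (n.choose k : ℝ) * ((n : ℝ) + 1) * h₂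
  · rw [chooseProd_eq_zero hk, chooseProd_eq_zero (by omega)]
    ring

lemma chooseProd_succ_right_mul (n k : ℕ) :
    chooseProd n (k + 1) * ((k : ℝ) + 1) ^ 2 = chooseProd n k * ((n : ℝ) - k) * (n + k + 1) := by
  rcases le_or_gt k n with hk | hk
  · have h₁ := Nat.choose_succ_right_eq n k
    have h₂ := Nat.add_one_mul_choose_eq (n + k) k
    rw [show n + k + 1 = n + (k + 1) by omega] at h₂
    rw [← Nat.cast_inj (R := ℝ)] at h₁ h₂
    push_cast [Nat.cast_sub hk] at h₁ h₂
    unfold chooseProd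
    linear_combination ((n + (k + 1)).choose (k + 1) : ℝ) * ((k : ℝ) + 1) * h₁
      - (n.choose k : ℝ) * ((n : ℝ) - k) * h₂
  · rw [chooseProd_eq_zero hk, chooseProd_eq_zero (by omega)]
    ring

lemma chooseProd_eq_of_succ_left (n k : ℕ) :
    chooseProd n (k + 1) = chooseProd (n + 1) k * ((n : ℝ) + 1 - k) * (n - k) / (k + 1) ^ 2 ∧
    chooseProd (n + 1) (k + 1) =
      chooseProd (n + 1) k * ((n : ℝ) + 1 - k) * (n + k + 2) / (k + 1) ^ 2 ∧
    chooseProd (n + 2) (k + 1) =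
      chooseProd (n + 1) k * ((n : ℝ) + k + 2) * (n + k + 3) / (k + 1) ^ 2 ∧
    chooseProd n k = chooseProd (n + 1) k * ((n : ℝ) + 1 - k) / (n + k + 1) := by
  have hL₀ := chooseProd_succ_left_mul n k
  have hL₁ := chooseProd_succ_left_mul (n + 1) k
  have hR₀ := chooseProd_succ_right_mul n k
  have hR₁ := chooseProd_succ_right_mul (n + 1) k
  have hR₂ := chooseProd_succ_right_mul (n + 2) k
  push_cast at hL₁ hR₁ hR₂
  have hk : ((k : ℝ) + 1) ^ 2 ≠ 0 := by positivity
  have hnk : (n : ℝ) + k + 1 ≠ 0 := by positivity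
  refine ⟨?_, ?_, ?_, ?_⟩ <;> field_simp
  · linear_combination hR₀ - ((n : ℝ) - k) * hL₀
  · linear_combination hR₁
  · linear_combination hR₂ + ((n : ℝ) + k + 3) * hL₁
  · linear_combination -hL₀

noncomputable def aperyPoly (x : ℝ) : ℝ := 34 * x ^ 3 + 51 * x ^ 2 + 27 * x + 5

noncomputable def aperyOp (u : ℕ → ℝ) (n : ℕ) : ℝ :=
  ((n : ℝ) + 2) ^ 3 * u (n + 2) - aperyPoly ((n : ℝ) + 1) * u (n + 1) + ((n : ℝ) + 1) ^ 3 * u n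

noncomputable def aperyB (n k : ℕ) : ℝ :=
  4 * (2 * (n : ℝ) + 1) * ((k : ℝ) * (2 * k + 1) - (2 * (n : ℝ) + 1) ^ 2) * chooseProd n k ^ 2

lemma aperyOp_chooseProd_sq (n k : ℕ) :
    aperyOp (fun m ↦ chooseProd m (k + 1) ^ 2) n = aperyB (n + 1) (k + 1) - aperyB (n + 1) k := by
  obtain ⟨h₀, h₁, h₂, -⟩ := chooseProd_eq_of_succ_left n k
  simp only [aperyOp, aperyB, aperyPoly]
  rw [h₀, h₁, h₂]
  push_cast
  field_simp
  ring

noncomputable def aperyEps (n m : ℕ) : ℝ := (-1) ^ (m + 1) / (2 * (m : ℝ) ^ 3 * chooseProd n m)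

noncomputable def aperyC (n k : ℕ) : ℝ := zseq n + ∑ m ∈ Icc 1 k, aperyEps n m

noncomputable def aperyD (n k : ℕ) : ℝ :=
  (-1) ^ k / (((n : ℝ) + 1) ^ 2 * ((n : ℝ) + k + 1) * chooseProd n k)

lemma zseq_succ (n : ℕ) : zseq (n + 1) = zseq n + 1 / ((n : ℝ) + 1) ^ 3 := by
  rw [zseq, zseq, sum_Icc_succ_top (by omega)]
  push_cast
  ring

lemma aperyC_zero_right (n : ℕ) : aperyC n 0 = zseq n := by simp [aperyC]

lemma aperyC_succ_right (n k : ℕ) : aperyC n (k + 1) = aperyC n k + aperyEps n (k + 1) := by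
  rw [aperyC, aperyC, sum_Icc_succ_top (by omega), add_assoc]

lemma aperyEps_succ_left_sub {n k : ℕ} (hk : k < n) :
    aperyEps (n + 1) (k + 1) - aperyEps n (k + 1) = aperyD n (k + 1) - aperyD n k := by
  obtain ⟨h₀, h₁, -, h⟩ := chooseProd_eq_of_succ_left n k
  have hX := (chooseProd_pos (show k ≤ n + 1 by omega)).ne'
  have hnk : (n : ℝ) - k ≠ 0 := sub_ne_zero.2 (by norm_cast; omega)
  have hnk' : (n : ℝ) + 1 - k ≠ 0 := sub_ne_zero.2 (by norm_cast; omega)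
  simp only [aperyEps, aperyD]
  rw [h₀, h₁, h]
  push_cast
  field_simp
  ring

lemma aperyC_succ_left_sub {n k : ℕ} (hk : k ≤ n) : aperyC (n + 1) k - aperyC n k = aperyD n k := by
  induction k with
  | zero =>
    rw [aperyC_zero_right, aperyC_zero_right, zseq_succ, aperyD, chooseProd_zero_right]
    push_cast
    ring
  | succ k ih =>
    rw [aperyC_succ_right, aperyC_succ_right]
    linear_combination ih (by omega) + aperyEps_succ_left_sub (show k < n by omega)

noncomputable def aperyT (n k : ℕ) : ℝ :=
  5 * (2 * (n : ℝ) + 1) * (-1) ^ (k + 1) * k * chooseProd n k / (n * (n + 1))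

noncomputable def aperyA (n k : ℕ) : ℝ := aperyB n k * aperyC n k + aperyT n k

lemma sq_mul_div_mul_self {K : Type*} [Field K] (x a b : K) :
    x ^ 2 * (a / (b * x)) = a * x / b := by
  rcases eq_or_ne x 0 with rfl | hx
  · simp
  · field_simp

lemma chooseProd_sq_mul_aperyD_sub {n k : ℕ} (hk : k ≤ n) :
    ((n : ℝ) + 2) ^ 3 * chooseProd (n + 2) (k + 1) ^ 2 * aperyD (n + 1) (k + 1)
      - ((n : ℝ) + 1) ^ 3 * chooseProd n (k + 1) ^ 2 * aperyD n (k + 1)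
      = aperyB (n + 1) k * aperyEps (n + 1) (k + 1)
        + aperyT (n + 1) (k + 1) - aperyT (n + 1) k := by
  obtain ⟨h₀, h₁, h₂, -⟩ := chooseProd_eq_of_succ_left n k
  have hX := (chooseProd_pos (show k ≤ n + 1 by omega)).ne'
  have hnk : (n : ℝ) + 1 - k ≠ 0 := sub_ne_zero.2 (by norm_cast; omega)
  -- `chooseProd n (k + 1)` vanishes for `k = n`: cancel it before expressing it via `h₀`
  rw [mul_assoc _ (chooseProd n (k + 1) ^ 2)]
  unfold aperyD
  rw [sq_mul_div_mul_self]
  simp only [aperyB, aperyEps, aperyT]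
  rw [h₀, h₁, h₂]
  push_cast
  field_simp
  ring

lemma chooseProd_sq_mul_aperyD_add_aperyEps_self (n : ℕ) :
    ((n : ℝ) + 2) ^ 3 * chooseProd (n + 2) (n + 2) ^ 2
        * (aperyD (n + 1) (n + 1) + aperyEps (n + 2) (n + 2))
      = -aperyT (n + 1) (n + 1) := by
  obtain ⟨-, -, h₂, -⟩ := chooseProd_eq_of_succ_left n (n + 1)
  have hX := (chooseProd_pos (le_refl (n + 1))).ne'
  simp only [aperyD, aperyEps, aperyT]
  rw [h₂]
  push_cast
  field_simp
  ring

lemma aperyOp_sum_eq_zero_of_telescoping (w : ℕ → ℕ → ℝ) (G : ℕ → ℝ) (n : ℕ)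
    (hw : ∀ m k, m < k → w m k = 0) (hG : G (n + 2) = 0)
    (h₀ : aperyOp (fun m ↦ w m 0) n = G 0)
    (hsucc : ∀ k ≤ n + 1, aperyOp (fun m ↦ w m (k + 1)) n = G (k + 1) - G k) :
    aperyOp (fun m ↦ ∑ k ∈ range (m + 1), w m k) n = 0 := by
  have hext : ∀ m ≤ n + 2, ∑ k ∈ range (m + 1), w m k = ∑ k ∈ range (n + 3), w m k :=
    fun m hm ↦ sum_subset (range_subset_range.2 (by omega))
      (fun k _ hk ↦ hw m k (by simp only [mem_range] at hk; omega))
  calc aperyOp (fun m ↦ ∑ k ∈ range (m + 1), w m k) n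
      = aperyOp (fun m ↦ ∑ k ∈ range (n + 3), w m k) n := by
        simp only [aperyOp, hext n (by omega), hext (n + 1) (by omega), hext (n + 2) le_rfl]
    _ = ∑ k ∈ range (n + 3), aperyOp (fun m ↦ w m k) n := by
        simp only [aperyOp, mul_sum, ← sum_sub_distrib, ← sum_add_distrib]
    _ = G (n + 2) := by
        rw [sum_range_succ',
          sum_congr rfl (fun k hk ↦ hsucc k (by simp only [mem_range] at hk; omega)),
          sum_range_sub, h₀]
        ring
    _ = 0 := hG

lemma aseq_eq_sum (n : ℕ) : aseq n = ∑ k ∈ range (n + 1), chooseProd n k ^ 2 := by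
  simp [aseq, chooseProd, mul_pow]

lemma aperyOp_aseq (n : ℕ) : aperyOp aseq n = 0 := by
  rw [funext aseq_eq_sum]
  refine aperyOp_sum_eq_zero_of_telescoping _ (aperyB (n + 1)) n
    (fun m k h ↦ by simp [chooseProd_eq_zero h])
    (by simp [aperyB, chooseProd_eq_zero]) ?_ (fun k _ ↦ aperyOp_chooseProd_sq n k)
  simp only [aperyOp, aperyB, aperyPoly, chooseProd_zero_right]
  push_cast
  ring

lemma aperyOp_chooseProd_sq_mul_aperyC {n k : ℕ} (hk : k ≤ n + 1) :
    aperyOp (fun m ↦ chooseProd m (k + 1) ^ 2 * aperyC m (k + 1)) n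
      = aperyA (n + 1) (k + 1) - aperyA (n + 1) k := by
  have hI := aperyOp_chooseProd_sq n k
  rcases Nat.lt_or_ge k (n + 1) with hk | hk
  · have hII := chooseProd_sq_mul_aperyD_sub (show k ≤ n by omega)
    have hc₂ : aperyC (n + 2) (k + 1) - aperyC (n + 1) (k + 1) = aperyD (n + 1) (k + 1) :=
      aperyC_succ_left_sub (by omega)
    have hc₀ : chooseProd n (k + 1) ^ 2 * (aperyC (n + 1) (k + 1) - aperyC n (k + 1))
        = chooseProd n (k + 1) ^ 2 * aperyD n (k + 1) := by
      rcases Nat.lt_or_ge k n with hkn | hkn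
      · rw [aperyC_succ_left_sub hkn]
      · simp [chooseProd_eq_zero (show n < k + 1 by omega)]
    have hc := aperyC_succ_right (n + 1) k
    simp only [aperyOp, aperyA] at hI ⊢
    linear_combination aperyC (n + 1) (k + 1) * hI
      + ((n : ℝ) + 2) ^ 3 * chooseProd (n + 2) (k + 1) ^ 2 * hc₂ - ((n : ℝ) + 1) ^ 3 * hc₀
      - aperyB (n + 1) k * hc + hII
  · obtain rfl : k = n + 1 := by omega
    have hII := chooseProd_sq_mul_aperyD_add_aperyEps_self n
    have hc₂ : aperyC (n + 2) (n + 1) - aperyC (n + 1) (n + 1) = aperyD (n + 1) (n + 1) :=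
      aperyC_succ_left_sub (by omega)
    have hc := aperyC_succ_right (n + 2) (n + 1)
    have h₁ : chooseProd (n + 1) (n + 2) = 0 := chooseProd_eq_zero (by omega)
    have h₀ : chooseProd n (n + 2) = 0 := chooseProd_eq_zero (by omega)
    have hT : aperyT (n + 1) (n + 2) = 0 := by simp [aperyT, h₁]
    simp only [aperyOp, aperyA, aperyB, hT, h₀, h₁] at hI ⊢
    linear_combination aperyC (n + 1) (n + 1) * hI
      + ((n : ℝ) + 2) ^ 3 * chooseProd (n + 2) (n + 2) ^ 2 * (hc + hc₂) + hII

lemma bseq_eq_sum (n : ℕ) : bseq n = ∑ k ∈ range (n + 1), chooseProd n k ^ 2 * aperyC n k := by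
  have hdouble : ∑ k ∈ Icc 1 n, ∑ m ∈ Icc 1 k,
      (-1 : ℝ) ^ (m + 1) * (n.choose k : ℝ) ^ 2 * ((n + k).choose k : ℝ) ^ 2 /
        (2 * (m : ℝ) ^ 3 * (n.choose m : ℝ) * ((n + m).choose m : ℝ))
      = ∑ k ∈ range (n + 1), chooseProd n k ^ 2 * ∑ m ∈ Icc 1 k, aperyEps n m := by
    refine sum_subset (fun k hk ↦ by simp only [mem_Icc, mem_range] at hk ⊢; omega)
      (fun k _ hk ↦ ?_) |>.trans (sum_congr rfl fun k _ ↦ ?_)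
    · obtain rfl : k = 0 := by simp only [mem_Icc, mem_range] at *; omega
      simp
    · rw [mul_sum]
      refine sum_congr rfl fun m _ ↦ ?_
      simp only [aperyEps, chooseProd]
      ring
  simp only [bseq, hdouble, aseq_eq_sum, aperyC, mul_add, sum_add_distrib, sum_mul]

lemma aperyOp_bseq (n : ℕ) : aperyOp bseq n = 0 := by
  rw [funext bseq_eq_sum]
  refine aperyOp_sum_eq_zero_of_telescoping _ (aperyA (n + 1)) n
    (fun m k h ↦ by simp [chooseProd_eq_zero h])
    (by simp [aperyA, aperyB, aperyT, chooseProd_eq_zero]) ?_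
    (fun k hk ↦ aperyOp_chooseProd_sq_mul_aperyC hk)
  simp only [aperyOp, aperyA, aperyB, aperyT, aperyPoly, chooseProd_zero_right, aperyC_zero_right,
    zseq_succ (n + 1), zseq_succ n]
  push_cast
  field_simp
  ring

lemma casoratian_eq {u v : ℕ → ℝ} (hu : ∀ n, aperyOp u n = 0) (hv : ∀ n, aperyOp v n = 0) (n : ℕ) :
    ((n : ℝ) + 1) ^ 3 * (u n * v (n + 1) - u (n + 1) * v n) = u 0 * v 1 - u 1 * v 0 := by
  induction n with
  | zero => simp
  | succ n ih =>
    have hu' := hu n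
    have hv' := hv n
    simp only [aperyOp] at hu' hv'
    rw [← ih]
    push_cast
    linear_combination u (n + 1) * hv' - v (n + 1) * hu'

lemma aseq_pos (n : ℕ) : 0 < aseq n := by
  rw [aseq_eq_sum, sum_range_succ']
  simp only [chooseProd_zero_right]
  positivity

lemma bseq_div_aseq_lt_succ (n : ℕ) : bseq n / aseq n < bseq (n + 1) / aseq (n + 1) := by
  have hW := casoratian_eq aperyOp_aseq aperyOp_bseq n
  have h₀ : aseq 0 * bseq 1 - aseq 1 * bseq 0 = 6 := by
    norm_num [aseq, bseq, zseq, sum_range_succ]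
  have hW_pos : 0 < ((n : ℝ) + 1) ^ 3 * (aseq n * bseq (n + 1) - aseq (n + 1) * bseq n) := by
    rw [hW, h₀]
    norm_num
  rw [div_lt_div_iff₀ (aseq_pos n) (aseq_pos (n + 1))]
  linarith [pos_of_mul_pos_right hW_pos (by positivity)]

lemma zseq_eq_sum_range (n : ℕ) : zseq n = ∑ i ∈ range n, 1 / ((i : ℝ) + 1) ^ 3 := by
  induction n with
  | zero => simp [zseq]
  | succ n ih => rw [zseq_succ, sum_range_succ, ih]

lemma summable_one_div_add_one_pow_three : Summable fun m : ℕ ↦ 1 / ((m : ℝ) + 1) ^ 3 := by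
  have := (summable_nat_add_iff 1).mpr (Real.summable_one_div_nat_pow.mpr (by norm_num : 1 < 3))
  simpa using this

lemma tendsto_zseq : Tendsto zseq atTop (𝓝 zeta3) := by
  rw [funext zseq_eq_sum_range]
  exact summable_one_div_add_one_pow_three.hasSum.tendsto_sum_nat

lemma zseq_le_zeta3 (n : ℕ) : zseq n ≤ zeta3 := by
  rw [zseq_eq_sum_range]
  exact summable_one_div_add_one_pow_three.sum_le_tsum _ (fun _ _ ↦ by positivity)

lemma add_one_le_chooseProd {n m : ℕ} (hm : 1 ≤ m) (hmn : m ≤ n) :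
    (n : ℝ) + 1 ≤ chooseProd n m := by
  have h₁ : 1 ≤ n.choose m := Nat.choose_pos hmn
  have h₂ : n + 1 ≤ (n + m).choose m := by
    rw [add_comm n m, Nat.choose_symm_add, ← Nat.choose_succ_self_right n]
    exact Nat.choose_le_choose n (by omega)
  unfold chooseProd
  have h₁' : (1 : ℝ) ≤ n.choose m := by exact_mod_cast h₁
  have h₂' : (n : ℝ) + 1 ≤ (n + m).choose m := by exact_mod_cast h₂
  nlinarith

lemma abs_aperyEps_le {n m : ℕ} (hm : 1 ≤ m) (hmn : m ≤ n) :
    |aperyEps n m| ≤ 1 / (m : ℝ) ^ 3 / (2 * ((n : ℝ) + 1)) := by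
  have hμ := add_one_le_chooseProd hm hmn
  have hμ_pos := chooseProd_pos hmn
  rw [aperyEps, abs_div, abs_pow, abs_neg, abs_one, one_pow, abs_of_pos (by positivity), div_div,
    show (m : ℝ) ^ 3 * (2 * ((n : ℝ) + 1)) = 2 * (m : ℝ) ^ 3 * ((n : ℝ) + 1) by ring]
  gcongr

lemma abs_aperyC_sub_zseq_le {n k : ℕ} (hk : k ≤ n) :
    |aperyC n k - zseq n| ≤ zeta3 / (2 * ((n : ℝ) + 1)) := by
  calc |aperyC n k - zseq n| = |∑ m ∈ Icc 1 k, aperyEps n m| := by rw [aperyC, add_sub_cancel_left]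
    _ ≤ ∑ m ∈ Icc 1 k, |aperyEps n m| := abs_sum_le_sum_abs _ _
    _ ≤ ∑ m ∈ Icc 1 k, 1 / (m : ℝ) ^ 3 / (2 * ((n : ℝ) + 1)) :=
        sum_le_sum fun m hm ↦ abs_aperyEps_le (mem_Icc.1 hm).1 ((mem_Icc.1 hm).2.trans hk)
    _ = zseq k / (2 * ((n : ℝ) + 1)) := by rw [zseq, sum_div]
    _ ≤ zeta3 / (2 * ((n : ℝ) + 1)) := by gcongr; exact zseq_le_zeta3 k

lemma abs_bseq_div_aseq_sub_zseq_le (n : ℕ) :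
    |bseq n / aseq n - zseq n| ≤ zeta3 / (2 * ((n : ℝ) + 1)) := by
  have ha := aseq_pos n
  have hdiff : bseq n - aseq n * zseq n
      = ∑ k ∈ range (n + 1), chooseProd n k ^ 2 * (aperyC n k - zseq n) := by
    simp only [bseq_eq_sum, aseq_eq_sum, sum_mul, mul_sub, sum_sub_distrib]
  rw [show bseq n / aseq n - zseq n = (bseq n - aseq n * zseq n) / aseq n by field_simp, hdiff,
    abs_div, abs_of_pos ha, div_le_iff₀ ha, aseq_eq_sum, mul_sum]
  refine (abs_sum_le_sum_abs _ _).trans (sum_le_sum fun k hk ↦ ?_)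
  rw [abs_mul, abs_of_nonneg (by positivity), mul_comm]
  exact mul_le_mul_of_nonneg_right (abs_aperyC_sub_zseq_le (by simpa [Nat.lt_succ_iff] using hk))
    (by positivity)

lemma tendsto_bseq_div_aseq : Tendsto (fun n ↦ bseq n / aseq n) atTop (𝓝 zeta3) := by
  have hbound : Tendsto (fun n : ℕ ↦ zeta3 / (2 * ((n : ℝ) + 1))) atTop (𝓝 0) :=
    tendsto_const_nhds.div_atTop <|
      (tendsto_natCast_atTop_atTop.atTop_add tendsto_const_nhds).const_mul_atTop two_pos
  have hdiff : Tendsto (fun n ↦ bseq n / aseq n - zseq n) atTop (𝓝 0) :=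
    squeeze_zero_norm abs_bseq_div_aseq_sub_zseq_le hbound
  simpa using hdiff.add tendsto_zseq

theorem lt0_zeta3_minus_b_over_a_general (n : ℕ) :
    0 < zeta3 - bseq n / aseq n := by
  have hmono : StrictMono fun n ↦ bseq n / aseq n := strictMono_nat_of_lt_succ bseq_div_aseq_lt_succ
  have hle := hmono.monotone.ge_of_tendsto tendsto_bseq_div_aseq (n + 1)
  linarith [hmono n.lt_succ_self]

/-- For every `n ≥ 2`, `0 < ζ(3) - b n / a n`. -/
theorem lt0_zeta3_minus_b_over_a (n : ℕ) (hn : 2 ≤ n) :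
    0 < zeta3 - bseq n / aseq n :=
  lt0_zeta3_minus_b_over_a_general n
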